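/- Let C ≥ 2 be a natural number and let c : Fin C be a class index. Let R and U be finite index types (the remaining and unlearning data). Let δ, N₂, γ, M be positive reals, and suppose: for each x in R there are u_x, v_x : Fin C → ℝ and an index i_x with u_x i_x - u_x j ≥ δ for all j ≠ i_x, and |v_x k| ≤ N₂ for all k; and for each x in U there are u_x, v_x : Fin C → ℝ with v_x c - v_x j ≥ γ for all j ≠ c, and |u_x k| ≤ M for all k. If 4 * M * N₂ < δ * γ, then there exists β > 0 such that: (1) for every x in R, i_x is the unique strict argmax of u_x - β • v_x (i.e., u_x j - β * v_x j < u_x i_x - β * v_x i_x for all j ≠ i_x); and (2) for every x in U, c is not an argmax of u_x - β • v_x (i.e., there exists j ≠ c with u_x j - β * v_x j > u_x c - β * v_x c). -/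

import Mathlib

/-!
Subtracting `β • v` changes a difference of two logits by at most `2 β N₂` on remaining data,
which cannot close a gap `δ` once `2 β N₂ < δ`; on unlearning data it lowers the logit of `c`
relative to any other class by at least `β γ`, which beats any difference `≤ 2 M` of learning
logits once `2 M < β γ`. The hypothesis `4 M N₂ < δ γ` says the window `2 M / γ < β < δ / (2 N₂)`
is nonempty.
-/

theorem sub_mul_lt_sub_mul_of_gap_of_abs_le {a a' b b' β δ N : ℝ} (hβ : 0 ≤ β)
    (hgap : δ ≤ a - a') (hb : |b| ≤ N) (hb' : |b'| ≤ N) (hsmall : 2 * β * N < δ) :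
    a' - β * b' < a - β * b := by
  have hdiff : β * (b - b') ≤ β * (2 * N) :=
    mul_le_mul_of_nonneg_left (by linarith [abs_le.mp hb, abs_le.mp hb']) hβ
  linarith

theorem sub_mul_lt_sub_mul_of_abs_le_of_gap {a a' b b' β γ M : ℝ} (hβ : 0 ≤ β)
    (ha : |a| ≤ M) (ha' : |a'| ≤ M) (hgap : γ ≤ b - b') (hlarge : 2 * M < β * γ) :
    a - β * b < a' - β * b' := by
  have hdiff : β * γ ≤ β * (b - b') := mul_le_mul_of_nonneg_left hgap hβ
  linarith [abs_le.mp ha, abs_le.mp ha']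

theorem exists_pos_two_mul_mul_lt_and_two_mul_lt_mul {δ N γ M : ℝ} (hN : 0 < N) (hγ : 0 < γ)
    (hM : 0 < M) (h : 4 * M * N < δ * γ) :
    ∃ β : ℝ, 0 < β ∧ 2 * β * N < δ ∧ 2 * M < β * γ := by
  have hwindow : 2 * M / γ < δ / (2 * N) := by
    rw [div_lt_div_iff₀ hγ (by positivity)]
    linarith
  obtain ⟨β, hlo, hhi⟩ := exists_between hwindow
  refine ⟨β, (by positivity : 0 < 2 * M / γ).trans hlo, ?_, ?_⟩
  · linarith [(lt_div_iff₀ (by positivity : (0 : ℝ) < 2 * N)).mp hhi]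
  · exact (div_lt_iff₀ hγ).mp hlo

theorem fedau_class_unlearning_general
    (C : ℕ) (hC : 2 ≤ C) (c : Fin C)
    (R U : Type*)
    (δ N₂ γ M : ℝ) (hN₂ : 0 < N₂) (hγ : 0 < γ) (hM : 0 < M)
    (uR vR : R → Fin C → ℝ) (iR : R → Fin C)
    (hgapR : ∀ x : R, ∀ j : Fin C, j ≠ iR x → δ ≤ uR x (iR x) - uR x j)
    (hboundR : ∀ x : R, ∀ k : Fin C, |vR x k| ≤ N₂)
    (uU vU : U → Fin C → ℝ)
    (hgapU : ∀ x : U, ∀ j : Fin C, j ≠ c → γ ≤ vU x c - vU x j)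
    (hboundU : ∀ x : U, ∀ k : Fin C, |uU x k| ≤ M)
    (hconst : 4 * M * N₂ < δ * γ) :
    ∃ β : ℝ, 0 < β ∧
      (∀ x : R, ∀ j : Fin C, j ≠ iR x →
        uR x j - β * vR x j < uR x (iR x) - β * vR x (iR x)) ∧
      (∀ x : U, ∃ j : Fin C, j ≠ c ∧
        uU x c - β * vU x c < uU x j - β * vU x j) := by
  obtain ⟨β, hβ, hsmall, hlarge⟩ :=
    exists_pos_two_mul_mul_lt_and_two_mul_lt_mul hN₂ hγ hM hconst
  have : Nontrivial (Fin C) := Fin.nontrivial_iff_two_le.mpr hC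
  obtain ⟨j, hj⟩ := exists_ne c
  refine ⟨β, hβ, fun x k hk => ?_, fun x => ⟨j, hj, ?_⟩⟩
  · exact sub_mul_lt_sub_mul_of_gap_of_abs_le hβ.le (hgapR x k hk) (hboundR x _) (hboundR x k)
      hsmall
  · exact sub_mul_lt_sub_mul_of_abs_le_of_gap hβ.le (hboundU x c) (hboundU x j) (hgapU x j hj)
      hlarge

/-- Theorem 1 (class unlearning, stated at the level of logit vectors with
explicit constants): if `4 M N₂ < δ γ`, there is a single `β > 0` such that
`u_x - β • v_x` keeps the argmax `i_x` on every remaining datum `x`, and on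
every unlearning datum the class `c` is no longer an argmax. -/
theorem fedau_class_unlearning
    (C : ℕ) (hC : 2 ≤ C) (c : Fin C)
    (R U : Type*) [Fintype R] [Fintype U]
    (δ N₂ γ M : ℝ) (hδ : 0 < δ) (hN₂ : 0 < N₂) (hγ : 0 < γ) (hM : 0 < M)
    (uR vR : R → Fin C → ℝ) (iR : R → Fin C)
    (hgapR : ∀ x : R, ∀ j : Fin C, j ≠ iR x → δ ≤ uR x (iR x) - uR x j)
    (hboundR : ∀ x : R, ∀ k : Fin C, |vR x k| ≤ N₂)
    (uU vU : U → Fin C → ℝ)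
    (hgapU : ∀ x : U, ∀ j : Fin C, j ≠ c → γ ≤ vU x c - vU x j)
    (hboundU : ∀ x : U, ∀ k : Fin C, |uU x k| ≤ M)
    (hconst : 4 * M * N₂ < δ * γ) :
    ∃ β : ℝ, 0 < β ∧
      (∀ x : R, ∀ j : Fin C, j ≠ iR x →
        uR x j - β * vR x j < uR x (iR x) - β * vR x (iR x)) ∧
      (∀ x : U, ∃ j : Fin C, j ≠ c ∧
        uU x c - β * vU x c < uU x j - β * vU x j) :=
  fedau_class_unlearning_general C hC c R U δ N₂ γ M hN₂ hγ hM uR vR iR hgapR hboundR uU vU hgapU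
    hboundU hconst
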